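/- Let f₀ : ℝ² → [0,∞) satisfy f₀(x,p) ≤ g(p) with g continuous, positive, even, decreasing in |p| and integrable. Let F be a bounded force field with sup norm ‖F‖_t on [0,t] and let f(t,x,p) = f₀(X(0;t,x,p), P(0;t,x,p)) be the characteristic solution. Then the density n(t,x) = ∫_ℝ f(t,x,p) dp is well-defined and satisfies n(t,x) ≤ M₀ + 2g(0)·t·‖F‖_t, where M₀ = ∫_ℝ g(p) dp. -/

import Mathlib

open Real Set MeasureTheory

/-- Density bound for a characteristic solution of the Vlasov equation:
if `f₀ ≤ g` with `g` an integrable decreasing even majorant and the force is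
bounded by `Fb` on `[0,t]`, then `n(t,x) = ∫ f₀(X(0;t,x,p), P(0;t,x,p)) dp` is
well defined and satisfies `n(t,x) ≤ M₀ + 2 g(0) t Fb`. -/
theorem density_bound_characteristic_solution
    (t x Fb : ℝ) (ht : 0 ≤ t) (hFb : 0 ≤ Fb)
    (v : ℝ → ℝ) (hv : LipschitzWith 1 v)
    (F : ℝ → ℝ → ℝ) (hFbdd : ∀ s ∈ Icc 0 t, ∀ y : ℝ, |F s y| ≤ Fb)
    (g : ℝ → ℝ) (hgc : Continuous g) (hgpos : ∀ p, 0 < g p)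
    (hgeven : ∀ p, g (-p) = g p)
    (hgdec : ∀ p q : ℝ, |p| ≤ |q| → g q ≤ g p)
    (hgint : Integrable g)
    (M₀ : ℝ) (hM₀ : M₀ = ∫ p : ℝ, g p)
    (f₀ : ℝ → ℝ → ℝ) (hf₀nonneg : ∀ y q, 0 ≤ f₀ y q)
    (hf₀le : ∀ y q, f₀ y q ≤ g q)
    (hf₀meas : Measurable (Function.uncurry f₀))
    (X P : ℝ → ℝ → ℝ)
    (hmeas : Measurable (fun p => (X p 0, P p 0)))
    (hX : ∀ p : ℝ, ∀ s ∈ Icc 0 t, HasDerivAt (X p) (v (P p s)) s)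
    (hP : ∀ p : ℝ, ∀ s ∈ Icc 0 t, HasDerivAt (P p) (-(F s (X p s))) s)
    (hfin : ∀ p : ℝ, X p t = x ∧ P p t = p) :
    Integrable (fun p : ℝ => f₀ (X p 0) (P p 0)) ∧
    (∫ p : ℝ, f₀ (X p 0) (P p 0)) ≤ M₀ + 2 * g 0 * t * Fb := by
  set r := t * Fb with hrdef
  have hr : 0 ≤ r := mul_nonneg ht hFb
  -- Step 1: |p - P p 0| ≤ r
  have hPbound : ∀ p : ℝ, |p - P p 0| ≤ r := by
    intro p
    have h0 : (0 : ℝ) ∈ Icc 0 t := ⟨le_refl 0, ht⟩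
    have htm : t ∈ Icc 0 t := ⟨ht, le_refl t⟩
    have := Convex.norm_image_sub_le_of_norm_hasDerivWithin_le
      (f := P p) (f' := fun s => -(F s (X p s))) (s := Icc 0 t)
      (fun s hs => (hP p s hs).hasDerivWithinAt)
      (fun s hs => by
        rw [norm_neg]
        exact hFbdd s hs (X p s)) (convex_Icc 0 t) htm h0
    rw [(hfin p).2] at this
    have ht0 : ‖(0 : ℝ) - t‖ = t := by
      rw [zero_sub, norm_neg, Real.norm_eq_abs, abs_of_nonneg ht]
    calc |p - P p 0| = ‖P p 0 - p‖ := by rw [Real.norm_eq_abs, abs_sub_comm]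
      _ ≤ Fb * ‖(0:ℝ) - t‖ := this
      _ = r := by rw [ht0]; ring
  -- The majorant
  set H : ℝ → ℝ := fun p =>
    Set.indicator (Icc (-r) r) (fun _ => g 0) p +
    Set.indicator (Ioi r) (fun q => g (q - r)) p +
    Set.indicator (Iio (-r)) (fun q => g (q + r)) p with hHdef
  -- Step 2: pointwise bound
  have hkey : ∀ p : ℝ, f₀ (X p 0) (P p 0) ≤ H p := by
    intro p
    have h1 : f₀ (X p 0) (P p 0) ≤ g (P p 0) := hf₀le _ _
    have h2 : |p| - r ≤ |P p 0| := by
      have := abs_sub_abs_le_abs_sub p (P p 0)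
      have := hPbound p
      linarith
    rcases lt_trichotomy p (-r) with hp | hp | hp
    · -- p < -r
      have hIcc : p ∉ Icc (-r) r := by intro h; exact absurd h.1 (not_le.2 hp)
      have hIoi : p ∉ Ioi r := by intro h; simp only [mem_Ioi] at h; linarith
      have hIio : p ∈ Iio (-r) := hp
      have habs : |p + r| ≤ |P p 0| := by
        rw [abs_of_nonpos (by linarith : p + r ≤ 0)]
        rw [abs_of_nonpos (by linarith : p ≤ 0)] at h2
        linarith
      have : g (P p 0) ≤ g (p + r) := hgdec _ _ habs
      simp only [hHdef, Set.indicator_of_notMem hIcc, Set.indicator_of_notMem hIoi,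
        Set.indicator_of_mem hIio]
      linarith
    · -- p = -r
      subst hp
      have hIcc : (-r) ∈ Icc (-r) r := ⟨le_refl _, by linarith⟩
      have hIoi : (-r) ∉ Ioi r := by simp; linarith
      have hIio : (-r) ∉ Iio (-r) := by simp
      have : g (P (-r) 0) ≤ g 0 := hgdec _ _ (by simp)
      simp only [hHdef, Set.indicator_of_mem hIcc, Set.indicator_of_notMem hIoi,
        Set.indicator_of_notMem hIio]
      linarith
    · rcases le_or_gt p r with hp2 | hp2
      · -- -r < p ≤ r
        have hIcc : p ∈ Icc (-r) r := ⟨le_of_lt hp, hp2⟩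
        have hIoi : p ∉ Ioi r := by simp; linarith
        have hIio : p ∉ Iio (-r) := by simp; linarith
        have : g (P p 0) ≤ g 0 := hgdec _ _ (by simp)
        simp only [hHdef, Set.indicator_of_mem hIcc, Set.indicator_of_notMem hIoi,
          Set.indicator_of_notMem hIio]
        linarith
      · -- p > r
        have hIcc : p ∉ Icc (-r) r := by intro h; exact absurd h.2 (not_le.2 hp2)
        have hIoi : p ∈ Ioi r := hp2
        have hIio : p ∉ Iio (-r) := by simp; linarith
        have habs : |p - r| ≤ |P p 0| := by
          rw [abs_of_nonneg (by linarith : 0 ≤ p - r)]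
          rw [abs_of_nonneg (by linarith : 0 ≤ p)] at h2
          linarith
        have : g (P p 0) ≤ g (p - r) := hgdec _ _ habs
        simp only [hHdef, Set.indicator_of_notMem hIcc, Set.indicator_of_mem hIoi,
          Set.indicator_of_notMem hIio]
        linarith
  -- Step 3: integrability of the majorant pieces
  have i1 : Integrable (Set.indicator (Icc (-r) r) (fun _ : ℝ => g 0)) := by
    refine IntegrableOn.integrable_indicator ?_ measurableSet_Icc
    exact integrableOn_const measure_Icc_lt_top.ne
  have i2 : Integrable (Set.indicator (Ioi r) (fun q : ℝ => g (q - r))) := by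
    refine IntegrableOn.integrable_indicator ?_ measurableSet_Ioi
    exact (Integrable.comp_sub_right hgint r).integrableOn
  have i3 : Integrable (Set.indicator (Iio (-r)) (fun q : ℝ => g (q + r))) := by
    refine IntegrableOn.integrable_indicator ?_ measurableSet_Iio
    exact (Integrable.comp_add_right hgint r).integrableOn
  have hHint : Integrable H := (i1.add i2).add i3
  -- measurability of the integrand
  have hfmeas : Measurable (fun p : ℝ => f₀ (X p 0) (P p 0)) := hf₀meas.comp hmeas
  have hfint : Integrable (fun p : ℝ => f₀ (X p 0) (P p 0)) := by
    refine Integrable.mono' hHint hfmeas.aestronglyMeasurable ?_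
    filter_upwards with p
    rw [Real.norm_eq_abs, abs_of_nonneg (hf₀nonneg _ _)]
    exact hkey p
  refine ⟨hfint, ?_⟩
  -- Step 4: compute the integral of H
  have hmap : Measure.map (· + r) (volume : Measure ℝ) = volume :=
    map_add_right_eq_self volume r
  have e2 : ∫ p, Set.indicator (Ioi r) (fun q : ℝ => g (q - r)) p
      = ∫ q in Ioi (0:ℝ), g q := by
    rw [integral_indicator measurableSet_Ioi]
    have h1 := setIntegral_map (μ := volume) (g := fun y : ℝ => y + r)
      (f := fun y => g (y - r)) (s := Ioi r) measurableSet_Ioi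
      (by rw [hmap]; exact (hgc.comp (by continuity)).aestronglyMeasurable) (by fun_prop)
    rw [hmap] at h1
    rw [h1]
    have hpre : (fun y : ℝ => y + r) ⁻¹' Ioi r = Ioi 0 := by ext y; simp
    rw [hpre]
    simp
  have hmap' : Measure.map (· + (-r)) (volume : Measure ℝ) = volume :=
    map_add_right_eq_self volume (-r)
  have e3 : ∫ p, Set.indicator (Iio (-r)) (fun q : ℝ => g (q + r)) p
      = ∫ q in Iio (0:ℝ), g q := by
    rw [integral_indicator measurableSet_Iio]
    have h1 := setIntegral_map (μ := volume) (g := fun y : ℝ => y + (-r))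
      (f := fun y => g (y + r)) (s := Iio (-r)) measurableSet_Iio
      (by rw [hmap']; exact (hgc.comp (by continuity)).aestronglyMeasurable) (by fun_prop)
    rw [hmap'] at h1
    rw [h1]
    have hpre : (fun y : ℝ => y + (-r)) ⁻¹' Iio (-r) = Iio 0 := by ext y; simp
    rw [hpre]
    congr 1
    ext y
    ring_nf
  have e1 : ∫ p, Set.indicator (Icc (-r) r) (fun _ : ℝ => g 0) p = 2 * r * g 0 := by
    rw [integral_indicator_const _ measurableSet_Icc]
    rw [measureReal_def, Real.volume_Icc, ENNReal.toReal_ofReal (by linarith : (0:ℝ) ≤ r - -r)]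
    simp only [smul_eq_mul]
    ring
  have esplit : (∫ q in Iio (0:ℝ), g q) + ∫ q in Ioi (0:ℝ), g q = ∫ q, g q := by
    rw [← integral_Ici_eq_integral_Ioi]
    exact intervalIntegral.integral_Iio_add_Ici hgint.integrableOn hgint.integrableOn
  have hHval : ∫ p, H p = 2 * r * g 0 + M₀ := by
    have s1 : (∫ p, H p) = (∫ p, ((Icc (-r) r).indicator (fun _ : ℝ => g 0) p
          + (Ioi r).indicator (fun q => g (q - r)) p))
        + ∫ p, (Iio (-r)).indicator (fun q => g (q + r)) p := integral_add (i1.add i2) i3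
    have s2 : (∫ p, ((Icc (-r) r).indicator (fun _ : ℝ => g 0) p
          + (Ioi r).indicator (fun q => g (q - r)) p))
        = (∫ p, (Icc (-r) r).indicator (fun _ : ℝ => g 0) p)
        + ∫ p, (Ioi r).indicator (fun q => g (q - r)) p := integral_add i1 i2
    rw [s1, s2, e1, e2, e3, hM₀]
    linarith
  calc (∫ p : ℝ, f₀ (X p 0) (P p 0)) ≤ ∫ p, H p := integral_mono hfint hHint hkey
    _ = M₀ + 2 * g 0 * t * Fb := by rw [hHval, hrdef]; ring
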